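/- Let b = (b_1,…,b_r) and b′ = (b′_1,…,b′_{r′}) be T-chains with discrepancy vectors δ and δ′ respectively, and assume δ_r + δ′_1 ≤ −1. Let L be the labeled chain whose entries carry the distinct labels 1,…,r+r′+1 in order and whose weights are b_1,…,b_r, 1, b′_1,…,b′_{r′}. Then for every labeled chain M reachable from L by blow-down steps, every label i ∈ {1,…,r} lying in the center of b and every label r+1+j with j in the center of b′ still occurs among the labels of M; that is, no curve in the center of either T-chain is ever contracted. -/

import Mathlib

/-- Hirzebruch–Jung continued fraction: `hjcf [b₁,…,b_r] = b₁ - 1/(b₂ - 1/(⋯ - 1/b_r))`.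
(With the convention `hjcf [] = 0`, so that `hjcf [b] = b` since `1/0 = 0`.) -/
def hjcf : List ℚ → ℚ
  | [] => 0
  | b :: l => b - 1 / hjcf l

/-- Hirzebruch–Jung continued fraction of a list of integers. -/
def hjcfZ (b : List ℤ) : ℚ := hjcf (b.map (fun x => (x : ℚ)))

/-- `δ` is a discrepancy vector for the chain `b`. -/
def IsDiscrepancyVector (b : List ℤ) (δ : List ℚ) : Prop :=
  δ.length = b.length ∧
    ∀ i < b.length,
      -((b.getD i 0 : ℚ)) * δ.getD i 0
          + (if i = 0 then 0 else δ.getD (i - 1) 0) + δ.getD (i + 1) 0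
        = (b.getD i 0 : ℚ) - 2

/-- A labeled chain: a finite list of (label, weight) pairs. -/
abbrev LChain := List (ℕ × ℤ)

/-- Decrease the weight of the first entry by one (identity on the empty chain). -/
def decFirst (L : LChain) : LChain := L.modifyHead (fun p => (p.1, p.2 - 1))

/-- Decrease the weight of the last entry by one (identity on the empty chain). -/
def decLast (L : LChain) : LChain := (L.reverse.modifyHead (fun p => (p.1, p.2 - 1))).reverse

/-- A blow-down step: contract an entry of weight 1, decreasing the weights of its
neighbours by one. -/
def BlowDownStep (L M : LChain) : Prop :=
  ∃ (L₁ L₂ : LChain) (ℓ : ℕ),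
    L = L₁ ++ [(ℓ, (1 : ℤ))] ++ L₂ ∧ M = decLast L₁ ++ decFirst L₂

/-- `M` is reachable from `L` by finitely many blow-down steps. -/
def ReachableBD : LChain → LChain → Prop := Relation.ReflTransGen BlowDownStep

/-!
Write `a_i = 1 + δ_i` for the log discrepancies of a chain, extended by `a = 1` beyond both ends;
the adjunction equations say `b_i a_i = a_{i-1} + a_{i+1}`. By uniqueness of solutions of this
boundary value problem, `continuant b * a_i` is the sum of the continuants of the two parts of
the chain on either side of position `i`. For a T-chain `continuant b = dn²`, and that sum is a
positive multiple of `dn` (it solves the same recurrence and starts with `dn²` and `dna`), so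
`a_i ≥ 1/n`, the center being where `a_i = 1/n`.

On the glued chain `b, 1, b'` give the `1`-curve the value `a_r + a'_1 ≤ 1`. Then on every curve
of weight `w` and value `e` the values of the neighbours sum to at most `w e`. Blowing down a
`1`-curve keeps this true, since the neighbours' values sum to at most its own value and each
neighbour loses one unit of weight. A curve `c` of the center of `b` has value `1/n`, everything
to its left has value at least `1/n` and everything to its right a positive value, so its
neighbours always sum to more than `1/n` and `c` can never be a `1`-curve; symmetrically for `b'`.
-/
def continuant : List ℤ → ℤ
  | [] => 1
  | [x] => x
  | x :: y :: l => x * continuant (y :: l) - continuant l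

section

variable {b : List ℤ}

lemma continuant_cons_of_ne_nil (x : ℤ) {l : List ℤ} (hl : l ≠ []) :
    continuant (x :: l) = x * continuant l - continuant l.tail := by
  match l, hl with
  | _ :: _, _ => rfl

lemma hjcfZ_cons (x : ℤ) (l : List ℤ) : hjcfZ (x :: l) = x - 1 / hjcfZ l := rfl

lemma continuant_tail_pos_and_lt (h2 : ∀ x ∈ b, 2 ≤ x) (hb : b ≠ []) :
    0 < continuant b.tail ∧ continuant b.tail < continuant b := by
  induction b with
  | nil => exact absurd rfl hb
  | cons x l ih =>
    have hx : 2 ≤ x := h2 x List.mem_cons_self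
    rcases eq_or_ne l [] with rfl | hl
    · simp [continuant]; omega
    · obtain ⟨ih₁, ih₂⟩ := ih (fun z hz => h2 z (List.mem_cons_of_mem x hz)) hl
      rw [continuant_cons_of_ne_nil x hl, List.tail_cons]
      constructor <;> nlinarith

lemma continuant_pos (h2 : ∀ x ∈ b, 2 ≤ x) : 0 < continuant b := by
  rcases eq_or_ne b [] with rfl | hb
  · exact Int.one_pos
  · obtain ⟨h₁, h₂⟩ := continuant_tail_pos_and_lt h2 hb
    exact h₁.trans h₂

lemma hjcfZ_eq_continuant_div (h2 : ∀ x ∈ b, 2 ≤ x) (hb : b ≠ []) :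
    hjcfZ b = continuant b / continuant b.tail := by
  induction b with
  | nil => exact absurd rfl hb
  | cons x l ih =>
    rcases eq_or_ne l [] with rfl | hl
    · simp [hjcfZ, hjcf, continuant]
    · have hl0 : (continuant l : ℚ) ≠ 0 :=
        (Int.cast_pos.mpr (continuant_pos fun z hz => h2 z (List.mem_cons_of_mem x hz))).ne'
      have ih := ih (fun z hz => h2 z (List.mem_cons_of_mem x hz)) hl
      rw [hjcfZ_cons, ih, one_div_div, continuant_cons_of_ne_nil x hl,
        List.tail_cons]
      push_cast
      field_simp

lemma isCoprime_continuant_tail (b : List ℤ) : IsCoprime (continuant b) (continuant b.tail) := by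
  induction b with
  | nil => exact isCoprime_one_left
  | cons x l ih =>
    rcases eq_or_ne l [] with rfl | hl
    · exact isCoprime_one_right
    · rw [continuant_cons_of_ne_nil x hl, List.tail_cons, sub_eq_neg_add, mul_comm]
      exact ih.symm.neg_left.add_mul_left_left x

lemma continuant_eq_of_hjcfZ_eq {p q : ℤ} (h2 : ∀ x ∈ b, 2 ≤ x) (hb : b ≠ []) (hq : 0 < q)
    (hpq : IsCoprime p q) (h : hjcfZ b = p / q) :
    continuant b = p ∧ continuant b.tail = q := by
  have ht : 0 < continuant b.tail := (continuant_tail_pos_and_lt h2 hb).1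
  rw [hjcfZ_eq_continuant_div h2 hb, div_eq_div_iff (by positivity) (by positivity)] at h
  have hcross : continuant b * q = p * continuant b.tail := by exact_mod_cast h
  have hp : p ∣ continuant b :=
    hpq.dvd_of_dvd_mul_right ⟨continuant b.tail, by rw [← hcross]⟩
  have hc : continuant b ∣ p :=
    (isCoprime_continuant_tail b).dvd_of_dvd_mul_right ⟨q, by rw [hcross, mul_comm]⟩
  have hp0 : 0 < p := by
    have := continuant_pos h2
    nlinarith
  have hcp : continuant b = p := Int.dvd_antisymm (continuant_pos h2).le hp0.le hc hp
  rw [hcp] at hcross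
  exact ⟨hcp, (mul_left_cancel₀ hp0.ne' hcross).symm⟩

end

/-- `u` solves the recurrence `b_j u_j = u_{j-1} + u_{j+1}` of the chain `b`, its entries being
indexed from `1` so that `u 0` and `u (b.length + 1)` are the boundary values. -/
def IsChainSolution {α : Type*} [CommRing α] (b : List ℤ) (u : ℕ → α) : Prop :=
  ∀ j < b.length, (b.getD j 0 : α) * u (j + 1) = u j + u (j + 2)

/-- `leftContinuant b (i + 1)` is the continuant of the first `i` entries of `b`. -/
def leftContinuant (b : List ℤ) : ℕ → ℤ
  | 0 => 0
  | 1 => 1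
  | i + 2 => b.getD i 0 * leftContinuant b (i + 1) - leftContinuant b i

def rightContinuant (b : List ℤ) (i : ℕ) : ℤ :=
  if i ≤ b.length then continuant (b.drop i) else 0

namespace IsChainSolution

variable {α : Type*} [CommRing α] {b : List ℤ} {u v : ℕ → α}

lemma intCast {v : ℕ → ℤ} (hv : IsChainSolution b v) :
    IsChainSolution b (fun i => (v i : α)) := by
  intro j hj
  have h := congrArg (Int.cast : ℤ → α) (hv j hj)
  push_cast at h
  exact h

lemma wronskian_eq (hu : IsChainSolution b u) (hv : IsChainSolution b v) :
    ∀ i ≤ b.length, u (i + 1) * v i - u i * v (i + 1) = u 1 * v 0 - u 0 * v 1 := by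
  intro i
  induction i with
  | zero => intro _; rfl
  | succ i ih =>
    intro hi
    rw [← ih (by omega)]
    linear_combination u (i + 1) * hv i (by omega) - v (i + 1) * hu i (by omega)

lemma add (hu : IsChainSolution b u) (hv : IsChainSolution b v) :
    IsChainSolution b (fun i => u i + v i) := by
  intro j hj
  linear_combination hu j hj + hv j hj

lemma const_mul_sub (c : α) (hu : IsChainSolution b u) (hv : IsChainSolution b v) :
    IsChainSolution b (fun i => c * u i - v i) := by
  intro j hj
  linear_combination c * hu j hj - hv j hj

lemma eq_mul_leftContinuant (hu : IsChainSolution b u) (h0 : u 0 = 0) :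
    ∀ i ≤ b.length + 1, u i = u 1 * leftContinuant b i := by
  intro i
  induction i using Nat.twoStepInduction with
  | zero => intro _; simp [h0, leftContinuant]
  | one => intro _; simp [leftContinuant]
  | more i ih₁ ih₂ =>
    intro hi
    rw [leftContinuant]
    push_cast
    linear_combination (-1 : α) * hu i (by omega) + (b.getD i 0 : α) * ih₂ (by omega) -
      ih₁ (by omega)

lemma dvd {k : ℤ} {u : ℕ → ℤ} (hu : IsChainSolution b u) (h0 : k ∣ u 0) (h1 : k ∣ u 1) :
    ∀ i ≤ b.length + 1, k ∣ u i := by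
  intro i
  induction i using Nat.twoStepInduction with
  | zero => exact fun _ => h0
  | one => exact fun _ => h1
  | more i ih₁ ih₂ =>
    intro hi
    have hrec : u (i + 2) = b.getD i 0 * u (i + 1) - u i := by
      linear_combination -hu i (by omega)
    rw [hrec]
    exact dvd_sub (dvd_mul_of_dvd_right (ih₂ (by omega)) _) (ih₁ (by omega))

end IsChainSolution

section

variable {b : List ℤ}

lemma isChainSolution_leftContinuant (b : List ℤ) : IsChainSolution b (leftContinuant b) := by
  intro j _
  simp only [leftContinuant, Int.cast_id]
  ring

lemma leftContinuant_nonneg_and_lt_succ (h2 : ∀ x ∈ b, 2 ≤ x) :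
    ∀ i ≤ b.length,
      0 ≤ leftContinuant b i ∧ leftContinuant b i < leftContinuant b (i + 1) := by
  intro i
  induction i with
  | zero => intro _; simp [leftContinuant]
  | succ i ih =>
    intro hi
    obtain ⟨ih₁, ih₂⟩ := ih (by omega)
    have hb : 2 ≤ b.getD i 0 := by
      rw [List.getD_eq_getElem _ _ (by omega)]
      exact h2 _ (List.getElem_mem _)
    refine ⟨by omega, ?_⟩
    show _ < b.getD i 0 * leftContinuant b (i + 1) - leftContinuant b i
    nlinarith

lemma leftContinuant_nonneg (h2 : ∀ x ∈ b, 2 ≤ x) {i : ℕ} (hi : i ≤ b.length + 1) :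
    0 ≤ leftContinuant b i := by
  rcases Nat.lt_or_ge i (b.length + 1) with hi' | hi'
  · exact (leftContinuant_nonneg_and_lt_succ h2 i (by omega)).1
  · obtain ⟨h₁, h₂⟩ := leftContinuant_nonneg_and_lt_succ h2 b.length le_rfl
    rw [show i = b.length + 1 by omega]
    omega

end

section

variable {b : List ℤ}

lemma isChainSolution_rightContinuant (b : List ℤ) : IsChainSolution b (rightContinuant b) := by
  intro j hj
  have hdrop : b.drop j = b.getD j 0 :: b.drop (j + 1) := by
    rw [List.getD_eq_getElem _ _ hj]
    exact List.drop_eq_getElem_cons hj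
  simp only [rightContinuant, Int.cast_id, if_pos hj.le, if_pos (Nat.succ_le_of_lt hj), hdrop]
  rcases Nat.lt_or_ge (j + 1) b.length with h | h
  · rw [if_pos (show j + 2 ≤ b.length by omega),
      continuant_cons_of_ne_nil _ (by simpa using h), List.tail_drop]
    ring
  · rw [if_neg (by omega), List.drop_eq_nil_of_le h]
    simp [continuant]

lemma rightContinuant_zero : rightContinuant b 0 = continuant b := by simp [rightContinuant]

lemma rightContinuant_one (hb : b ≠ []) : rightContinuant b 1 = continuant b.tail := by
  rw [rightContinuant, if_pos (show 1 ≤ b.length from List.length_pos_iff.mpr hb),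
    List.drop_one]

lemma rightContinuant_length : rightContinuant b b.length = 1 := by
  simp [rightContinuant, continuant]

lemma rightContinuant_length_succ : rightContinuant b (b.length + 1) = 0 := by
  simp [rightContinuant]

lemma rightContinuant_pos (h2 : ∀ x ∈ b, 2 ≤ x) {i : ℕ} (hi : i ≤ b.length) :
    0 < rightContinuant b i := by
  rw [rightContinuant, if_pos hi]
  exact continuant_pos fun x hx => h2 x (List.mem_of_mem_drop hx)

end

lemma leftContinuant_length_succ (b : List ℤ) :
    leftContinuant b (b.length + 1) = continuant b := by
  have h := (isChainSolution_leftContinuant b).wronskian_eq (isChainSolution_rightContinuant b)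
    b.length le_rfl
  simpa [rightContinuant_length, rightContinuant_length_succ, rightContinuant_zero,
    leftContinuant] using h

/-- The log discrepancies `1 + δ_i`, indexed from `1`, with value `1` at `0` and past the end. -/
def logDiscrepancy (δ : List ℚ) (i : ℕ) : ℚ := if i = 0 then 1 else 1 + δ.getD (i - 1) 0

section

variable {δ : List ℚ}

lemma logDiscrepancy_zero : logDiscrepancy δ 0 = 1 := rfl

lemma logDiscrepancy_succ (i : ℕ) : logDiscrepancy δ (i + 1) = 1 + δ.getD i 0 := rfl

lemma logDiscrepancy_of_length_lt {i : ℕ} (hi : δ.length < i) : logDiscrepancy δ i = 1 := by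
  obtain ⟨j, rfl⟩ := Nat.exists_eq_add_one_of_ne_zero (by omega : i ≠ 0)
  rw [logDiscrepancy_succ, List.getD_eq_default _ _ (by omega), add_zero]

lemma logDiscrepancy_length : logDiscrepancy δ δ.length = 1 + δ.getD (δ.length - 1) 0 := by
  rcases δ.eq_nil_or_concat with rfl | ⟨l, x, rfl⟩ <;> simp [logDiscrepancy]

end

namespace IsDiscrepancyVector

variable {b : List ℤ} {δ : List ℚ}

lemma isChainSolution (hδ : IsDiscrepancyVector b δ) :
    IsChainSolution b (logDiscrepancy δ) := by
  intro j hj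
  have h := hδ.2 j hj
  rcases j with _ | j
  · simp only [if_pos] at h
    show (b.getD 0 0 : ℚ) * (1 + δ.getD 0 0) = 1 + (1 + δ.getD 1 0)
    linear_combination -h
  · simp only [Nat.add_one_ne_zero, if_false, Nat.add_sub_cancel] at h
    show (b.getD (j + 1) 0 : ℚ) * (1 + δ.getD (j + 1) 0) =
      (1 + δ.getD j 0) + (1 + δ.getD (j + 2) 0)
    linear_combination -h

/-- `continuant b • logDiscrepancy` and `leftContinuant + rightContinuant` solve the same
boundary value problem, whose solution is unique since `leftContinuant` does not vanish at the
right end. -/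
lemma continuant_mul_logDiscrepancy (hδ : IsDiscrepancyVector b δ) (h2 : ∀ x ∈ b, 2 ≤ x) :
    ∀ i ≤ b.length + 1, (continuant b : ℚ) * logDiscrepancy δ i =
      leftContinuant b i + rightContinuant b i := by
  set F : ℕ → ℚ := fun i =>
    (continuant b : ℚ) * logDiscrepancy δ i - ((leftContinuant b i : ℚ) + rightContinuant b i)
  have hF : IsChainSolution b F := hδ.isChainSolution.const_mul_sub _
    ((isChainSolution_leftContinuant b).intCast.add (isChainSolution_rightContinuant b).intCast)
  have hF0 : F 0 = 0 := by simp [F, logDiscrepancy, leftContinuant, rightContinuant_zero]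
  have hFr : F (b.length + 1) = 0 := by
    simp [F, logDiscrepancy_of_length_lt (i := b.length + 1) (by rw [hδ.1]; omega),
      leftContinuant_length_succ, rightContinuant_length_succ]
  have hF1 : F 1 = 0 := by
    have h := hF.eq_mul_leftContinuant hF0 _ le_rfl
    rw [hFr, leftContinuant_length_succ] at h
    have hc : (continuant b : ℚ) ≠ 0 := by exact_mod_cast (continuant_pos h2).ne'
    simpa [hc] using h.symm
  intro i hi
  have h := hF.eq_mul_leftContinuant hF0 i hi
  rw [hF1, zero_mul] at h
  simp only [F] at h
  linarith

lemma one_div_le_logDiscrepancy {d n a : ℤ} (hd : 1 ≤ d) (ha : 0 < a) (han : a < n)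
    (h2 : ∀ x ∈ b, 2 ≤ x)
    (hcf : hjcfZ b = ((d * n ^ 2 : ℤ) : ℚ) / ((d * n * a - 1 : ℤ) : ℚ))
    (hδ : IsDiscrepancyVector b δ) (i : ℕ) : 1 / (n : ℚ) ≤ logDiscrepancy δ i := by
  have hn : (1 : ℚ) ≤ n := by exact_mod_cast (by omega : (1 : ℤ) ≤ n)
  have hn1 : 1 / (n : ℚ) ≤ 1 := div_le_one_of_le₀ hn (by positivity)
  rcases Nat.eq_zero_or_pos i with rfl | hi0
  · rwa [logDiscrepancy_zero]
  rcases Nat.lt_or_ge b.length i with hir | hir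
  · rwa [logDiscrepancy_of_length_lt (hδ.1 ▸ hir)]
  have hdn : 2 ≤ d * n := by nlinarith
  have hq : 0 < d * n * a - 1 := by nlinarith
  have hb : b ≠ [] := by
    have hp : 0 < d * n ^ 2 := mul_pos (by omega) (pow_pos (by omega) 2)
    have : (0 : ℚ) < hjcfZ b := hcf ▸ div_pos (by exact_mod_cast hp) (by exact_mod_cast hq)
    rintro rfl
    simp [hjcfZ, hjcf] at this
  obtain ⟨hc, ht⟩ := continuant_eq_of_hjcfZ_eq h2 hb hq
    ⟨d * a ^ 2, -(d * n * a + 1), by ring⟩ hcf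
  have hdvd : d * n ∣ leftContinuant b i + rightContinuant b i := by
    refine ((isChainSolution_leftContinuant b).add (isChainSolution_rightContinuant b)).dvd
      ?_ ?_ i (by omega)
    · exact ⟨n, by simp [leftContinuant, rightContinuant_zero, hc]; ring⟩
    · exact ⟨a, by simp [leftContinuant, rightContinuant_one hb, ht]⟩
  have hle : d * n ≤ leftContinuant b i + rightContinuant b i :=
    Int.le_of_dvd (by linarith [leftContinuant_nonneg h2 (i := i) (by omega),
      rightContinuant_pos h2 hir]) hdvd
  have hmul := hδ.continuant_mul_logDiscrepancy h2 i (by omega)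
  rw [hc] at hmul
  have hleQ : ((d * n : ℤ) : ℚ) ≤ (d * n ^ 2 : ℤ) * logDiscrepancy δ i := by
    rw [hmul]; exact_mod_cast hle
  have hdnQ : (0 : ℚ) < d * n := by exact_mod_cast (by omega : 0 < d * n)
  rw [div_le_iff₀ (by linarith)]
  push_cast at hleQ
  nlinarith

end IsDiscrepancyVector

section Superharmonic

variable (E : ℕ → ℚ)

def headValue : LChain → ℚ
  | [] => 1
  | p :: _ => E p.1

def lastValue : ℚ → LChain → ℚ
  | e, [] => e
  | _, p :: t => lastValue (E p.1) t

/-- Every entry `(ℓ, w)` satisfies `E (left neighbour) + E (right neighbour) ≤ w * E ℓ`, where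
the value left of the chain is `e` and the value right of it is `1`. -/
def IsSuperharmonic : ℚ → LChain → Prop
  | _, [] => True
  | e, p :: t => e + headValue E t ≤ p.2 * E p.1 ∧ IsSuperharmonic (E p.1) t

/-- A weight-one entry `(c, 1)` would need neighbours whose values sum to at most `E c`. -/
def IsProtected (c : ℕ) : Prop :=
  ∃ eL eR : ℚ, eL ≤ 1 ∧ eR ≤ 1 ∧ E c < eL + eR ∧
    (∀ x < c, eL ≤ E x) ∧ ∀ x, c < x → eR ≤ E x

variable {E}

@[simp] lemma headValue_cons (p : ℕ × ℤ) (t : LChain) : headValue E (p :: t) = E p.1 := rfl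

lemma isSuperharmonic_cons {e : ℚ} {p : ℕ × ℤ} {t : LChain} :
    IsSuperharmonic E e (p :: t) ↔
      e + headValue E t ≤ p.2 * E p.1 ∧ IsSuperharmonic E (E p.1) t := Iff.rfl

lemma lastValue_eq_or_exists (L : LChain) (e : ℚ) :
    lastValue E e L = e ∨ ∃ q ∈ L, lastValue E e L = E q.1 := by
  induction L generalizing e with
  | nil => exact Or.inl rfl
  | cons p t ih =>
    rcases ih (E p.1) with h | ⟨q, hq, h⟩
    · exact Or.inr ⟨p, List.mem_cons_self, h⟩
    · exact Or.inr ⟨q, List.mem_cons_of_mem p hq, h⟩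

lemma decLast_append_singleton (L : LChain) (p : ℕ × ℤ) :
    decLast (L ++ [p]) = L ++ [(p.1, p.2 - 1)] := by
  simp [decLast, List.modifyHead]

lemma decLast_cons (p : ℕ × ℤ) {t : LChain} (ht : t ≠ []) :
    decLast (p :: t) = p :: decLast t := by
  obtain ⟨t', q, rfl⟩ := (List.eq_nil_or_concat t).resolve_left ht
  simp only [List.concat_eq_append, ← List.cons_append, decLast_append_singleton]

lemma map_fst_decFirst (L : LChain) : (decFirst L).map Prod.fst = L.map Prod.fst := by
  cases L <;> rfl

lemma map_fst_decLast (L : LChain) : (decLast L).map Prod.fst = L.map Prod.fst := by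
  rcases List.eq_nil_or_concat L with rfl | ⟨t, p, rfl⟩
  · rfl
  · simp [decLast_append_singleton]

lemma headValue_decFirst (L : LChain) : headValue E (decFirst L) = headValue E L := by
  cases L <;> rfl

lemma headValue_append {L : LChain} (hL : L ≠ []) (X : LChain) :
    headValue E (L ++ X) = headValue E L := by
  match L, hL with
  | _ :: _, _ => rfl

lemma headValue_decLast_append {L : LChain} (hL : L ≠ []) (X : LChain) :
    headValue E (decLast L ++ X) = headValue E L := by
  match L, hL with
  | [p], _ => rw [← List.nil_append [p], decLast_append_singleton]; rfl
  | p :: q :: t, _ => rw [decLast_cons p (List.cons_ne_nil q t)]; rfl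

namespace IsSuperharmonic

lemma decFirst {L : LChain} {x e : ℚ} (h : IsSuperharmonic E x L) (he : e + headValue E L ≤ x) :
    IsSuperharmonic E e (_root_.decFirst L) := by
  match L, h with
  | [], _ => trivial
  | q :: t, ⟨hq, ht⟩ =>
    refine ⟨?_, ht⟩
    simp only [headValue] at he
    push_cast
    linarith

lemma blowDown {L₁ : LChain} {e : ℚ} {ℓ : ℕ} {L₂ : LChain}
    (h : IsSuperharmonic E e (L₁ ++ (ℓ, 1) :: L₂)) :
    IsSuperharmonic E e (decLast L₁ ++ _root_.decFirst L₂) := by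
  induction L₁ generalizing e with
  | nil =>
    rw [List.nil_append, isSuperharmonic_cons] at h
    exact h.2.decFirst (by simpa using h.1)
  | cons p t ih =>
    rcases eq_or_ne t [] with rfl | ht
    · simp only [List.cons_append, List.nil_append, isSuperharmonic_cons, headValue_cons,
        Int.cast_one, one_mul] at h
      obtain ⟨hp, hℓ, h₂⟩ := h
      rw [← List.nil_append [p], decLast_append_singleton, List.nil_append, List.singleton_append]
      refine ⟨?_, h₂.decFirst (by linarith)⟩
      rw [headValue_decFirst]
      push_cast
      linarith
    · rw [List.cons_append, isSuperharmonic_cons, headValue_append ht] at h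
      rw [decLast_cons p ht, List.cons_append, isSuperharmonic_cons, headValue_decLast_append ht]
      exact ⟨h.1, ih h.2⟩

lemma add_le_mul : ∀ {L₁ : LChain} {e : ℚ} {p : ℕ × ℤ} {L₂ : LChain},
    IsSuperharmonic E e (L₁ ++ p :: L₂) →
      lastValue E e L₁ + headValue E L₂ ≤ p.2 * E p.1
  | [], _, _, _, ⟨hp, _⟩ => hp
  | _ :: t, _, _, _, ⟨_, h⟩ => add_le_mul (L₁ := t) h

end IsSuperharmonic

lemma IsProtected.not_isSuperharmonic {c : ℕ} (hc : IsProtected E c) {L₁ L₂ : LChain}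
    (hsorted : ((L₁ ++ (c, 1) :: L₂).map Prod.fst).Pairwise (· < ·)) :
    ¬ IsSuperharmonic E 1 (L₁ ++ (c, 1) :: L₂) := by
  intro hL
  obtain ⟨eL, eR, heL, heR, hcE, hleft, hright⟩ := hc
  have hmid := hL.add_le_mul
  simp only [List.map_append, List.map_cons, List.pairwise_append, List.pairwise_cons,
    List.mem_cons] at hsorted
  have hlast : eL ≤ lastValue E 1 L₁ := by
    rcases lastValue_eq_or_exists L₁ 1 with h | ⟨q, hq, h⟩
    · rw [h]; exact heL
    · rw [h]; exact hleft _ (hsorted.2.2 _ (List.mem_map_of_mem hq) _ (Or.inl rfl))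
  have hhead : eR ≤ headValue E L₂ := by
    match L₂, hsorted with
    | [], _ => exact heR
    | q :: _, hs => exact hright _ (hs.2.1.1 _ (List.mem_map_of_mem List.mem_cons_self))
  simp only [Int.cast_one, one_mul] at hmid
  linarith

end Superharmonic

namespace BlowDownStep

variable {E : ℕ → ℚ} {L M : LChain}

lemma map_fst (h : BlowDownStep L M) :
    ∃ L₁ L₂ ℓ, L.map Prod.fst = L₁ ++ ℓ :: L₂ ∧ M.map Prod.fst = L₁ ++ L₂ := by
  obtain ⟨L₁, L₂, ℓ, rfl, rfl⟩ := h
  exact ⟨L₁.map Prod.fst, L₂.map Prod.fst, ℓ, by simp,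
    by rw [List.map_append, map_fst_decLast, map_fst_decFirst]⟩

lemma labels_sublist (h : BlowDownStep L M) : (M.map Prod.fst).Sublist (L.map Prod.fst) := by
  obtain ⟨L₁, L₂, ℓ, hL, hM⟩ := h.map_fst
  rw [hL, hM]
  exact (List.sublist_cons_self ℓ L₂).append_left L₁

lemma isSuperharmonic {e : ℚ} (h : BlowDownStep L M) (hL : IsSuperharmonic E e L) :
    IsSuperharmonic E e M := by
  obtain ⟨L₁, L₂, ℓ, rfl, rfl⟩ := h
  rw [List.append_assoc, List.singleton_append] at hL
  exact hL.blowDown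

lemma mem_labels (h : BlowDownStep L M) (hL : IsSuperharmonic E 1 L)
    (hsorted : (L.map Prod.fst).Pairwise (· < ·)) {c : ℕ} (hc : IsProtected E c)
    (hcL : c ∈ L.map Prod.fst) : c ∈ M.map Prod.fst := by
  obtain ⟨L₁, L₂, ℓ, rfl, rfl⟩ := h
  have hne : c ≠ ℓ := by
    rintro rfl
    rw [List.append_assoc, List.singleton_append] at hL hsorted
    exact hc.not_isSuperharmonic hsorted hL
  rw [List.map_append, map_fst_decLast, map_fst_decFirst, ← List.map_append]
  simp only [List.map_append, List.map_cons, List.map_nil, List.mem_append, List.mem_cons,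
    List.not_mem_nil, or_false] at hcL ⊢
  tauto

end BlowDownStep

namespace ReachableBD

variable {E : ℕ → ℚ} {L M : LChain}

lemma labels_sublist (h : ReachableBD L M) : (M.map Prod.fst).Sublist (L.map Prod.fst) := by
  induction h with
  | refl => exact List.Sublist.refl _
  | tail _ hstep ih => exact hstep.labels_sublist.trans ih

lemma isSuperharmonic {e : ℚ} (h : ReachableBD L M) (hL : IsSuperharmonic E e L) :
    IsSuperharmonic E e M := by
  induction h with
  | refl => exact hL
  | tail _ hstep ih => exact hstep.isSuperharmonic ih

lemma mem_labels (h : ReachableBD L M) (hL : IsSuperharmonic E 1 L)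
    (hsorted : (L.map Prod.fst).Pairwise (· < ·)) {c : ℕ} (hc : IsProtected E c)
    (hcL : c ∈ L.map Prod.fst) : c ∈ M.map Prod.fst := by
  induction h with
  | refl => exact hcL
  | tail hLK hstep ih =>
    exact hstep.mem_labels (isSuperharmonic hLK hL) (hsorted.sublist (labels_sublist hLK)) hc ih

end ReachableBD

def labelChain : ℕ → List ℤ → LChain
  | _, [] => []
  | s, x :: w => (s + 1, x) :: labelChain (s + 1) w

lemma labelChain_eq_zip (w : List ℤ) (s : ℕ) :
    labelChain s w = List.zip ((List.range w.length).map (· + (s + 1))) w := by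
  induction w generalizing s with
  | nil => rfl
  | cons x w ih =>
    rw [labelChain, ih, List.length_cons, List.range_succ_eq_map, List.map_cons, List.map_map,
      List.zip_cons_cons, zero_add]
    congr 3
    funext i
    simp only [Function.comp, Nat.succ_eq_add_one]
    omega

lemma map_fst_labelChain (w : List ℤ) (s : ℕ) :
    (labelChain s w).map Prod.fst = List.range' (s + 1) w.length := by
  induction w generalizing s with
  | nil => rfl
  | cons x w ih => rw [labelChain, List.map_cons, ih, List.length_cons, List.range'_succ]

lemma pairwise_map_fst_labelChain (w : List ℤ) (s : ℕ) :
    ((labelChain s w).map Prod.fst).Pairwise (· < ·) := by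
  rw [map_fst_labelChain]
  exact List.pairwise_lt_range'

lemma mem_map_fst_labelChain {w : List ℤ} {s c : ℕ} (hsc : s < c) (hc : c ≤ s + w.length) :
    c ∈ (labelChain s w).map Prod.fst := by
  rw [map_fst_labelChain, List.mem_range'_1]
  omega

def IsChainSupersolution (w : List ℤ) (E : ℕ → ℚ) : Prop :=
  ∀ j < w.length, E j + E (j + 2) ≤ w.getD j 0 * E (j + 1)

lemma IsChainSupersolution.isSuperharmonic_labelChain {E : ℕ → ℚ} {w : List ℤ} {s : ℕ}
    (hE : IsChainSupersolution w (fun i => E (s + i))) (hend : E (s + w.length + 1) = 1) :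
    IsSuperharmonic E (E s) (labelChain s w) := by
  induction w generalizing s with
  | nil => trivial
  | cons x w ih =>
    have hhead : headValue E (labelChain (s + 1) w) = E (s + 2) := by
      cases w with
      | nil => simpa [labelChain, headValue, add_assoc] using hend.symm
      | cons => rfl
    refine ⟨?_, ih (fun j hj => ?_) (by simpa [add_assoc, add_comm 1] using hend)⟩
    · rw [hhead]
      simpa using hE 0 (by simp)
    · have h := hE (j + 1) (by simpa using hj)
      simp only [List.getD_cons_succ] at h
      convert h using 3 <;> ring_nf

/-- Values on the chain `b ++ [1] ++ b'`: `s` on `b`, `s'` (shifted) on `b'`, and on the middle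
curve the sum of the values of its two neighbours. -/
def glue (r : ℕ) (s s' : ℕ → ℚ) (ℓ : ℕ) : ℚ :=
  if ℓ ≤ r then s ℓ else if ℓ = r + 1 then s r + s' 1 else s' (ℓ - (r + 1))

section

variable {r : ℕ} {s s' : ℕ → ℚ}

lemma glue_of_le {ℓ : ℕ} (hℓ : ℓ ≤ r) : glue r s s' ℓ = s ℓ := if_pos hℓ

lemma glue_self_add_one : glue r s s' (r + 1) = s r + s' 1 := by simp [glue]

lemma glue_add_one_add {k : ℕ} (hk : k ≠ 0) : glue r s s' (r + 1 + k) = s' k := by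
  rw [glue, if_neg (by omega), if_neg (by omega), Nat.add_sub_cancel_left]

lemma glue_le_of_le_add_one (hsr : s (r + 1) = 1) (hsum : s r + s' 1 ≤ 1) {ℓ : ℕ}
    (hℓ : ℓ ≤ r + 1) : glue r s s' ℓ ≤ s ℓ := by
  rcases Nat.lt_or_ge ℓ (r + 1) with h | h
  · exact (glue_of_le (by omega)).le
  · rw [show ℓ = r + 1 by omega, glue_self_add_one, hsr]
    exact hsum

lemma glue_add_one_add_le (hs'0 : s' 0 = 1) (hsum : s r + s' 1 ≤ 1) (k : ℕ) :
    glue r s s' (r + 1 + k) ≤ s' k := by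
  rcases eq_or_ne k 0 with rfl | hk
  · rw [add_zero, glue_self_add_one, hs'0]
    exact hsum
  · exact (glue_add_one_add hk).le

lemma min_le_glue {m m' : ℚ} (hm' : 0 ≤ m') (hs : ∀ i, m ≤ s i) (hs' : ∀ i, m' ≤ s' i)
    (ℓ : ℕ) : min m m' ≤ glue r s s' ℓ := by
  rcases Nat.lt_or_ge r ℓ with h | h
  · obtain ⟨k, rfl⟩ : ∃ k, ℓ = r + 1 + k := ⟨ℓ - (r + 1), by omega⟩
    rcases eq_or_ne k 0 with rfl | hk
    · rw [add_zero, glue_self_add_one]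
      linarith [min_le_left m m', hs r, hs' 1]
    · rw [glue_add_one_add hk]
      exact (min_le_right m m').trans (hs' k)
  · rw [glue_of_le h]
    exact (min_le_left m m').trans (hs ℓ)

lemma isProtected_glue_of_le {m m' : ℚ} (hm : 0 < m) (hm1 : m ≤ 1) (hm' : 0 < m')
    (hs : ∀ i, m ≤ s i) (hs' : ∀ i, m' ≤ s' i) {c : ℕ} (hc : c ≤ r) (hsc : s c = m) :
    IsProtected (glue r s s') c := by
  refine ⟨m, min m m', hm1, (min_le_left m m').trans hm1, ?_, fun x hx => ?_,
    fun x _ => min_le_glue hm'.le hs hs' x⟩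
  · rw [glue_of_le hc, hsc]
    exact lt_add_of_pos_right m (lt_min hm hm')
  · rw [glue_of_le (by omega)]
    exact hs x

lemma isProtected_glue_add_one_add {m m' : ℚ} (hm : 0 < m) (hm' : 0 < m') (hm'1 : m' ≤ 1)
    (hs : ∀ i, m ≤ s i) (hs' : ∀ i, m' ≤ s' i) {k : ℕ} (hk : k ≠ 0) (hsk : s' k = m') :
    IsProtected (glue r s s') (r + 1 + k) := by
  refine ⟨min m m', m', (min_le_right m m').trans hm'1, hm'1, ?_,
    fun x _ => min_le_glue hm'.le hs hs' x, fun x hx => ?_⟩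
  · rw [glue_add_one_add hk, hsk]
    exact lt_add_of_pos_left m' (lt_min hm hm')
  · obtain ⟨k', rfl⟩ : ∃ k', x = r + 1 + k' := ⟨x - (r + 1), by omega⟩
    rw [glue_add_one_add (by omega)]
    exact hs' k'

end

lemma IsChainSolution.isChainSupersolution_glue {b b' : List ℤ} {s s' : ℕ → ℚ}
    (hs : IsChainSolution b s) (hs' : IsChainSolution b' s') (hsr : s (b.length + 1) = 1)
    (hs'0 : s' 0 = 1) (hsum : s b.length + s' 1 ≤ 1) :
    IsChainSupersolution (b ++ [1] ++ b') (glue b.length s s') := by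
  intro j hj
  simp only [List.length_append, List.length_singleton] at hj
  rcases lt_trichotomy j b.length with h | rfl | h
  · have hw : (b ++ [1] ++ b').getD j 0 = b.getD j 0 := by
      rw [List.append_assoc, List.getD_append _ _ _ _ h]
    rw [hw, glue_of_le h.le, glue_of_le (show j + 1 ≤ b.length by omega), hs j h]
    linarith [glue_le_of_le_add_one (s' := s') hsr hsum (ℓ := j + 2) (by omega)]
  · have hw : (b ++ [1] ++ b').getD b.length 0 = 1 := by
      rw [List.append_assoc, List.getD_append_right _ _ _ _ le_rfl, Nat.sub_self]
      rfl
    rw [hw, glue_of_le le_rfl, glue_self_add_one, show b.length + 2 = b.length + 1 + 1 by ring,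
      glue_add_one_add one_ne_zero]
    simp
  · obtain ⟨k, rfl⟩ : ∃ k, j = b.length + 1 + k := ⟨j - (b.length + 1), by omega⟩
    have hw : (b ++ [1] ++ b').getD (b.length + 1 + k) 0 = b'.getD k 0 := by
      rw [List.getD_append_right _ _ _ _ (by simp), List.length_append, List.length_singleton,
        Nat.add_sub_cancel_left]
    rw [hw, show b.length + 1 + k + 1 = b.length + 1 + (k + 1) by ring,
      show b.length + 1 + k + 2 = b.length + 1 + (k + 2) by ring,
      glue_add_one_add (k := k + 1) (by omega), glue_add_one_add (k := k + 2) (by omega),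
      hs' k (by omega)]
    linarith [glue_add_one_add_le hs'0 hsum k]

lemma IsChainSolution.isSuperharmonic_glue_labelChain {b b' : List ℤ} {s s' : ℕ → ℚ}
    (hs : IsChainSolution b s) (hs' : IsChainSolution b' s') (hs0 : s 0 = 1)
    (hsr : s (b.length + 1) = 1) (hs'0 : s' 0 = 1) (hs'r : s' (b'.length + 1) = 1)
    (hsum : s b.length + s' 1 ≤ 1) :
    IsSuperharmonic (glue b.length s s') 1 (labelChain 0 (b ++ [1] ++ b')) := by
  have hE : IsChainSupersolution (b ++ [1] ++ b') (fun i => glue b.length s s' (0 + i)) := by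
    simpa only [zero_add] using hs.isChainSupersolution_glue hs' hsr hs'0 hsum
  have h := hE.isSuperharmonic_labelChain
  rw [glue_of_le (Nat.zero_le _), hs0] at h
  refine h ?_
  rw [List.length_append, List.length_append, List.length_singleton,
    show 0 + (b.length + 1 + b'.length) + 1 = b.length + 1 + (b'.length + 1) by ring,
    glue_add_one_add (Nat.succ_ne_zero _), hs'r]

lemma IsDiscrepancyVector.isSuperharmonic_glue_labelChain {b b' : List ℤ} {δ δ' : List ℚ}
    (hδ : IsDiscrepancyVector b δ) (hδ' : IsDiscrepancyVector b' δ')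
    (hsum : δ.getD (b.length - 1) 0 + δ'.getD 0 0 ≤ -1) :
    IsSuperharmonic (glue b.length (logDiscrepancy δ) (logDiscrepancy δ')) 1
      (labelChain 0 (b ++ [1] ++ b')) := by
  refine hδ.isChainSolution.isSuperharmonic_glue_labelChain hδ'.isChainSolution rfl
    (logDiscrepancy_of_length_lt (by rw [hδ.1]; omega)) rfl
    (logDiscrepancy_of_length_lt (by rw [hδ'.1]; omega)) ?_
  rw [← hδ.1] at hsum ⊢
  rw [logDiscrepancy_length, logDiscrepancy_succ]
  linarith

lemma logDiscrepancy_eq_one_div {δ : List ℚ} {n : ℚ} (hn : n ≠ 0) {i : ℕ} (hi : 1 ≤ i)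
    (hδi : δ.getD (i - 1) 0 = -(n - 1) / n) : logDiscrepancy δ i = 1 / n := by
  obtain ⟨i, rfl⟩ := Nat.exists_eq_add_one_of_ne_zero (by omega : i ≠ 0)
  rw [Nat.add_sub_cancel] at hδi
  rw [logDiscrepancy_succ, hδi]
  field_simp
  ring

theorem stmt9_general (d n a d' n' a' : ℤ)
    (hd : 1 ≤ d) (ha : 0 < a) (han : a < n)
    (hd' : 1 ≤ d') (ha' : 0 < a') (han' : a' < n')
    (b b' : List ℤ) (h2 : ∀ x ∈ b, 2 ≤ x) (h2' : ∀ x ∈ b', 2 ≤ x)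
    (hcf : hjcfZ b = ((d * n ^ 2 : ℤ) : ℚ) / ((d * n * a - 1 : ℤ) : ℚ))
    (hcf' : hjcfZ b' = ((d' * n' ^ 2 : ℤ) : ℚ) / ((d' * n' * a' - 1 : ℤ) : ℚ))
    (δ δ' : List ℚ)
    (hδ : IsDiscrepancyVector b δ) (hδ' : IsDiscrepancyVector b' δ')
    (hsum : δ.getD (b.length - 1) 0 + δ'.getD 0 0 ≤ -1)
    (L : LChain)
    (hL : L = List.zip ((List.range (b.length + b'.length + 1)).map (· + 1))
      (b ++ [1] ++ b'))
    (M : LChain) (hM : ReachableBD L M) :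
    (∀ i, 1 ≤ i → i ≤ b.length →
        δ.getD (i - 1) 0 = -((n : ℚ) - 1) / (n : ℚ) → ∃ p ∈ M, p.1 = i) ∧
      (∀ j, 1 ≤ j → j ≤ b'.length →
        δ'.getD (j - 1) 0 = -((n' : ℚ) - 1) / (n' : ℚ) →
          ∃ p ∈ M, p.1 = b.length + 1 + j) := by
  have hS := hδ.one_div_le_logDiscrepancy hd ha han h2 hcf
  have hS' := hδ'.one_div_le_logDiscrepancy hd' ha' han' h2' hcf'
  have hn : (1 : ℚ) ≤ n := by exact_mod_cast (by omega : (1 : ℤ) ≤ n)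
  have hn' : (1 : ℚ) ≤ n' := by exact_mod_cast (by omega : (1 : ℤ) ≤ n')
  have hchain : L = labelChain 0 (b ++ [1] ++ b') := by
    rw [hL, labelChain_eq_zip]
    simp [add_assoc]
  subst hchain
  have hsurvives : ∀ c, IsProtected (glue b.length (logDiscrepancy δ) (logDiscrepancy δ')) c →
      1 ≤ c → c ≤ b.length + 1 + b'.length → ∃ p ∈ M, p.1 = c := fun c hc hc1 hc2 =>
    List.mem_map.mp <| hM.mem_labels (hδ.isSuperharmonic_glue_labelChain hδ' hsum)
      (pairwise_map_fst_labelChain _ _) hc (mem_map_fst_labelChain hc1 (by simp; omega))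
  refine ⟨fun i hi1 hir hδi => hsurvives i ?_ hi1 (by omega),
    fun j hj1 hjr hδj => hsurvives _ ?_ (by omega) (by omega)⟩
  · exact isProtected_glue_of_le (by positivity) (div_le_one_of_le₀ hn (by positivity))
      (by positivity) hS hS' hir (logDiscrepancy_eq_one_div (by positivity) hi1 hδi)
  · exact isProtected_glue_add_one_add (by positivity) (by positivity)
      (div_le_one_of_le₀ hn' (by positivity)) hS hS' (by omega)
      (logDiscrepancy_eq_one_div (by positivity) hj1 hδj)

theorem stmt9 (d n a d' n' a' : ℤ)
    (hd : 1 ≤ d) (ha : 0 < a) (han : a < n) (hgcd : Int.gcd a n = 1)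
    (hd' : 1 ≤ d') (ha' : 0 < a') (han' : a' < n') (hgcd' : Int.gcd a' n' = 1)
    (b b' : List ℤ) (h2 : ∀ x ∈ b, 2 ≤ x) (h2' : ∀ x ∈ b', 2 ≤ x)
    (hcf : hjcfZ b = ((d * n ^ 2 : ℤ) : ℚ) / ((d * n * a - 1 : ℤ) : ℚ))
    (hcf' : hjcfZ b' = ((d' * n' ^ 2 : ℤ) : ℚ) / ((d' * n' * a' - 1 : ℤ) : ℚ))
    (δ δ' : List ℚ)
    (hδ : IsDiscrepancyVector b δ) (hδ' : IsDiscrepancyVector b' δ')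
    (hsum : δ.getD (b.length - 1) 0 + δ'.getD 0 0 ≤ -1)
    (L : LChain)
    (hL : L = List.zip ((List.range (b.length + b'.length + 1)).map (· + 1))
      (b ++ [1] ++ b'))
    (M : LChain) (hM : ReachableBD L M) :
    (∀ i, 1 ≤ i → i ≤ b.length →
        δ.getD (i - 1) 0 = -((n : ℚ) - 1) / (n : ℚ) → ∃ p ∈ M, p.1 = i) ∧
      (∀ j, 1 ≤ j → j ≤ b'.length →
        δ'.getD (j - 1) 0 = -((n' : ℚ) - 1) / (n' : ℚ) →
          ∃ p ∈ M, p.1 = b.length + 1 + j) :=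
  stmt9_general d n a d' n' a' hd ha han hd' ha' han' b b' h2 h2' hcf hcf' δ δ' hδ hδ' hsum L hL M
    hM
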